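/- arXiv:nlin/0202024 — 12 statements merged into one kernel-verified Lean document; each statement's English description precedes it below -/
import Mathlib

section
/- The cross-ratio equation is three-dimensionally consistent: if x, x1, x2, x3 are complex numbers and xij (for i<j) are defined by the cross-ratio equations (x-xi)(xij-xj)/((xi-xij)(xj-x)) = αi/αj, then the three values of x123 computed from the equations on the three faces (x1,x12,x31,x123), (x2,x23,x12,x123), (x3,x31,x23,x123) all coincide, and equal ((α1-α2)x1x2+(α3-α1)x3x1+(α2-α3)x2x3)/((α3-α2)x1+(α1-α3)x2+(α2-α1)x3). -/
/-!
Each face equation is of degree one in the vertex opposite to a given one, so the equations on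
the three faces at `x` determine `x12, x23, x31`, and those on the three faces at `x123`
determine `y1, y2, y3`. Substituting, the value obtained on the top face through `x1` is a
rational function of `x, x1, x2, x3` in which `x` cancels; the resulting expression is invariant
under the cyclic relabelling `1 → 2 → 3 → 1`, which carries the top face through `x1` to the one
through `x2` and that one to the one through `x3`, so the three values agree.
-/

section CrossRatio

variable {K : Type*} [Field K]

def crossRatioFourth (a b c α β : K) : K :=
  (β * (a - b) * c + α * b * (c - a)) / (β * (a - b) + α * (c - a))

def crossRatioApex (x1 x2 x3 α1 α2 α3 : K) : K :=
  ((α1 - α2) * x1 * x2 + (α3 - α1) * x3 * x1 + (α2 - α3) * x2 * x3) /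
    ((α3 - α2) * x1 + (α1 - α3) * x2 + (α2 - α1) * x3)

theorem eq_crossRatioFourth_of_crossRatio_eq {a b c d α β : K}
    (hden : (b - d) * (c - a) ≠ 0) (hβ : β ≠ 0)
    (h : (a - b) * (d - c) / ((b - d) * (c - a)) = α / β)
    (hsol : β * (a - b) + α * (c - a) ≠ 0) :
    d = crossRatioFourth a b c α β := by
  rw [crossRatioFourth, eq_div_iff hsol]
  linear_combination (div_eq_div_iff hden hβ).mp h

theorem crossRatioApex_rotate (x1 x2 x3 α1 α2 α3 : K) :
    crossRatioApex x2 x3 x1 α2 α3 α1 = crossRatioApex x1 x2 x3 α1 α2 α3 := by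
  unfold crossRatioApex
  ring

theorem crossRatioFourth_crossRatioFourth_eq_crossRatioApex {x x1 x2 x3 α1 α2 α3 : K}
    (hc12 : α2 * (x - x1) + α1 * (x2 - x) ≠ 0)
    (hc31 : α1 * (x - x3) + α3 * (x1 - x) ≠ 0)
    (hcf : α3 * (x1 - crossRatioFourth x x1 x2 α1 α2) +
      α2 * (crossRatioFourth x x3 x1 α3 α1 - x1) ≠ 0)
    (hD : (α3 - α2) * x1 + (α1 - α3) * x2 + (α2 - α1) * x3 ≠ 0) :
    crossRatioFourth x1 (crossRatioFourth x x1 x2 α1 α2) (crossRatioFourth x x3 x1 α3 α1) α2 α3 =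
      crossRatioApex x1 x2 x3 α1 α2 α3 := by
  rw [crossRatioFourth, crossRatioApex, div_eq_div_iff hcf hD]
  unfold crossRatioFourth
  field_simp
  ring

end CrossRatio

theorem crossRatio_three_dimensional_consistency_general
    (x x1 x2 x3 x12 x23 x31 y1 y2 y3 α1 α2 α3 : ℂ)
    (hα1 : α1 ≠ 0) (hα2 : α2 ≠ 0) (hα3 : α3 ≠ 0)
    -- nonvanishing of the denominators in the bottom face equations
    (hd12 : (x1 - x12) * (x2 - x) ≠ 0)
    (hd23 : (x2 - x23) * (x3 - x) ≠ 0)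
    (hd31 : (x3 - x31) * (x1 - x) ≠ 0)
    -- the cross-ratio equations on the three faces adjacent to `x`
    (h12 : (x - x1) * (x12 - x2) / ((x1 - x12) * (x2 - x)) = α1 / α2)
    (h23 : (x - x2) * (x23 - x3) / ((x2 - x23) * (x3 - x)) = α2 / α3)
    (h31 : (x - x3) * (x31 - x1) / ((x3 - x31) * (x1 - x)) = α3 / α1)
    -- nonvanishing of the denominators in the top face equations
    (he1 : (x12 - y1) * (x31 - x1) ≠ 0)
    (he2 : (x23 - y2) * (x12 - x2) ≠ 0)
    (he3 : (x31 - y3) * (x23 - x3) ≠ 0)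
    -- the cross-ratio equations on the three faces adjacent to `x123`
    (hf1 : (x1 - x12) * (y1 - x31) / ((x12 - y1) * (x31 - x1)) = α2 / α3)
    (hf2 : (x2 - x23) * (y2 - x12) / ((x23 - y2) * (x12 - x2)) = α3 / α1)
    (hf3 : (x3 - x31) * (y3 - x23) / ((x31 - y3) * (x23 - x3)) = α1 / α2)
    -- nonvanishing of the denominators arising when solving for `x12`, `x23`, `x31`
    (hc12 : α2 * (x - x1) + α1 * (x2 - x) ≠ 0)
    (hc23 : α3 * (x - x2) + α2 * (x3 - x) ≠ 0)
    (hc31 : α1 * (x - x3) + α3 * (x1 - x) ≠ 0)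
    -- nonvanishing of the denominators arising when solving for `x123`
    (hcf1 : α3 * (x1 - x12) + α2 * (x31 - x1) ≠ 0)
    (hcf2 : α1 * (x2 - x23) + α3 * (x12 - x2) ≠ 0)
    (hcf3 : α2 * (x3 - x31) + α1 * (x23 - x3) ≠ 0)
    (hD : (α3 - α2) * x1 + (α1 - α3) * x2 + (α2 - α1) * x3 ≠ 0) :
    y1 = ((α1 - α2) * x1 * x2 + (α3 - α1) * x3 * x1 + (α2 - α3) * x2 * x3) /
        ((α3 - α2) * x1 + (α1 - α3) * x2 + (α2 - α1) * x3) ∧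
    y2 = ((α1 - α2) * x1 * x2 + (α3 - α1) * x3 * x1 + (α2 - α3) * x2 * x3) /
        ((α3 - α2) * x1 + (α1 - α3) * x2 + (α2 - α1) * x3) ∧
    y3 = ((α1 - α2) * x1 * x2 + (α3 - α1) * x3 * x1 + (α2 - α3) * x2 * x3) /
        ((α3 - α2) * x1 + (α1 - α3) * x2 + (α2 - α1) * x3) := by
  have hy1 := eq_crossRatioFourth_of_crossRatio_eq he1 hα3 hf1 hcf1
  have hy2 := eq_crossRatioFourth_of_crossRatio_eq he2 hα1 hf2 hcf2
  have hy3 := eq_crossRatioFourth_of_crossRatio_eq he3 hα2 hf3 hcf3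
  obtain rfl := eq_crossRatioFourth_of_crossRatio_eq hd12 hα2 h12 hc12
  obtain rfl := eq_crossRatioFourth_of_crossRatio_eq hd23 hα3 h23 hc23
  obtain rfl := eq_crossRatioFourth_of_crossRatio_eq hd31 hα1 h31 hc31
  have hD2 : (α1 - α3) * x2 + (α2 - α1) * x3 + (α3 - α2) * x1 ≠ 0 := by
    convert hD using 1; ring
  have hD3 : (α2 - α1) * x3 + (α3 - α2) * x1 + (α1 - α3) * x2 ≠ 0 := by
    convert hD using 1; ring
  refine ⟨?_, ?_, ?_⟩
  · exact hy1.trans (crossRatioFourth_crossRatioFourth_eq_crossRatioApex hc12 hc31 hcf1 hD)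
  · rw [hy2, crossRatioFourth_crossRatioFourth_eq_crossRatioApex hc23 hc12 hcf2 hD2,
      crossRatioApex_rotate]
    rfl
  · rw [hy3, crossRatioFourth_crossRatioFourth_eq_crossRatioApex hc31 hc23 hcf3 hD3,
      crossRatioApex_rotate x2, crossRatioApex_rotate]
    rfl

/-- Three-dimensional consistency of the cross-ratio equation:
given initial data `x, x1, x2, x3` on a cube with pairwise distinct nonzero
parameters `α1, α2, α3`, the values `x12, x23, x31` defined by the cross-ratio
equations on the three bottom faces, and the three values `y1, y2, y3` for
`x123` determined from the three top faces, all coincide and equal the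
explicit rational expression. -/
theorem crossRatio_three_dimensional_consistency
    (x x1 x2 x3 x12 x23 x31 y1 y2 y3 α1 α2 α3 : ℂ)
    (hα1 : α1 ≠ 0) (hα2 : α2 ≠ 0) (hα3 : α3 ≠ 0)
    (h12ne : α1 ≠ α2) (h23ne : α2 ≠ α3) (h31ne : α3 ≠ α1)
    -- nonvanishing of the denominators in the bottom face equations
    (hd12 : (x1 - x12) * (x2 - x) ≠ 0)
    (hd23 : (x2 - x23) * (x3 - x) ≠ 0)
    (hd31 : (x3 - x31) * (x1 - x) ≠ 0)
    -- the cross-ratio equations on the three faces adjacent to `x`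
    (h12 : (x - x1) * (x12 - x2) / ((x1 - x12) * (x2 - x)) = α1 / α2)
    (h23 : (x - x2) * (x23 - x3) / ((x2 - x23) * (x3 - x)) = α2 / α3)
    (h31 : (x - x3) * (x31 - x1) / ((x3 - x31) * (x1 - x)) = α3 / α1)
    -- nonvanishing of the denominators in the top face equations
    (he1 : (x12 - y1) * (x31 - x1) ≠ 0)
    (he2 : (x23 - y2) * (x12 - x2) ≠ 0)
    (he3 : (x31 - y3) * (x23 - x3) ≠ 0)
    -- the cross-ratio equations on the three faces adjacent to `x123`
    (hf1 : (x1 - x12) * (y1 - x31) / ((x12 - y1) * (x31 - x1)) = α2 / α3)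
    (hf2 : (x2 - x23) * (y2 - x12) / ((x23 - y2) * (x12 - x2)) = α3 / α1)
    (hf3 : (x3 - x31) * (y3 - x23) / ((x31 - y3) * (x23 - x3)) = α1 / α2)
    -- nonvanishing of the denominators arising when solving for `x12`, `x23`, `x31`
    (hc12 : α2 * (x - x1) + α1 * (x2 - x) ≠ 0)
    (hc23 : α3 * (x - x2) + α2 * (x3 - x) ≠ 0)
    (hc31 : α1 * (x - x3) + α3 * (x1 - x) ≠ 0)
    -- nonvanishing of the denominators arising when solving for `x123`
    (hcf1 : α3 * (x1 - x12) + α2 * (x31 - x1) ≠ 0)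
    (hcf2 : α1 * (x2 - x23) + α3 * (x12 - x2) ≠ 0)
    (hcf3 : α2 * (x3 - x31) + α1 * (x23 - x3) ≠ 0)
    (hD : (α3 - α2) * x1 + (α1 - α3) * x2 + (α2 - α1) * x3 ≠ 0) :
    y1 = ((α1 - α2) * x1 * x2 + (α3 - α1) * x3 * x1 + (α2 - α3) * x2 * x3) /
        ((α3 - α2) * x1 + (α1 - α3) * x2 + (α2 - α1) * x3) ∧
    y2 = ((α1 - α2) * x1 * x2 + (α3 - α1) * x3 * x1 + (α2 - α3) * x2 * x3) /
        ((α3 - α2) * x1 + (α1 - α3) * x2 + (α2 - α1) * x3) ∧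
    y3 = ((α1 - α2) * x1 * x2 + (α3 - α1) * x3 * x1 + (α2 - α3) * x2 * x3) /
        ((α3 - α2) * x1 + (α1 - α3) * x2 + (α2 - α1) * x3) :=
  crossRatio_three_dimensional_consistency_general x x1 x2 x3 x12 x23 x31 y1 y2 y3 α1 α2 α3 hα1 hα2
    hα3 hd12 hd23 hd31 h12 h23 h31 he1 he2 he3 hf1 hf2 hf3 hc12 hc23 hc31 hcf1 hcf2 hcf3 hD
end

section
/- Suppose functions f1, f2, f3 of three complex variables satisfy the compatibility (three-dimensional consistency) condition: setting x23 = f1(x,x2,x3), x31 = f2(x,x3,x1), x12 = f3(x,x1,x2), the three expressions f1(x1,x12,x31), f2(x2,x23,x12), f3(x3,x31,x23) are all identically equal to a function z(x,x1,x2,x3). If z satisfies the tetrahedron condition ∂z/∂x = 0 identically, then the identity f3,x2·f2,x1·f1,x3 = −f3,x1·f2,x3·f1,x2 holds identically in x,x1,x2,x3, where f_{k,x_i} denotes the partial derivative of fk with respect to the argument occupied by x_i evaluated at the appropriate point. -/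
private lemma slice1 (F : ℝ → ℝ → ℝ → ℝ)
    (hF : Differentiable ℝ (fun p : ℝ × ℝ × ℝ => F p.1 p.2.1 p.2.2)) (b c : ℝ) :
    Differentiable ℝ (fun t => F t b c) := by
  have h : Differentiable ℝ (fun t : ℝ => ((t, b, c) : ℝ × ℝ × ℝ)) := by fun_prop
  exact hF.comp h

private lemma slice2 (F : ℝ → ℝ → ℝ → ℝ)
    (hF : Differentiable ℝ (fun p : ℝ × ℝ × ℝ => F p.1 p.2.1 p.2.2)) (a c : ℝ) :
    Differentiable ℝ (fun t => F a t c) := by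
  have h : Differentiable ℝ (fun t : ℝ => ((a, t, c) : ℝ × ℝ × ℝ)) := by fun_prop
  exact hF.comp h

private lemma slice3 (F : ℝ → ℝ → ℝ → ℝ)
    (hF : Differentiable ℝ (fun p : ℝ × ℝ × ℝ => F p.1 p.2.1 p.2.2)) (a b : ℝ) :
    Differentiable ℝ (fun t => F a b t) := by
  have h : Differentiable ℝ (fun t : ℝ => ((a, b, t) : ℝ × ℝ × ℝ)) := by fun_prop
  exact hF.comp h
private lemma chain3 (F : ℝ → ℝ → ℝ → ℝ)
    (hF : Differentiable ℝ (fun p : ℝ × ℝ × ℝ => F p.1 p.2.1 p.2.2))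
    (a : ℝ) (u v : ℝ → ℝ) (t0 : ℝ)
    (hu : DifferentiableAt ℝ u t0) (hv : DifferentiableAt ℝ v t0) :
    deriv (fun t => F a (u t) (v t)) t0 =
      deriv u t0 * deriv (fun s => F a s (v t0)) (u t0) +
      deriv v t0 * deriv (fun s => F a (u t0) s) (v t0) := by
  set G : ℝ × ℝ × ℝ → ℝ := fun p => F p.1 p.2.1 p.2.2 with hG
  have hFd : HasFDerivAt G (fderiv ℝ G (a, u t0, v t0)) (a, u t0, v t0) :=
    (hF (a, u t0, v t0)).hasFDerivAt
  set L := fderiv ℝ G (a, u t0, v t0) with hL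
  have hγ : HasDerivAt (fun t => ((a, u t, v t) : ℝ × ℝ × ℝ))
      ((0 : ℝ), deriv u t0, deriv v t0) t0 :=
    HasDerivAt.prodMk (hasDerivAt_const t0 a) (HasDerivAt.prodMk hu.hasDerivAt hv.hasDerivAt)
  have hcomp : HasDerivAt (fun t => F a (u t) (v t))
      (L ((0 : ℝ), deriv u t0, deriv v t0)) t0 := by have := hFd.comp_hasDerivAt t0 hγ; exact this
  have hs2 : HasDerivAt (fun s => F a s (v t0)) (L ((0 : ℝ), 1, 0)) (u t0) := by
    have hγ2 : HasDerivAt (fun s : ℝ => ((a, s, v t0) : ℝ × ℝ × ℝ))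
        ((0 : ℝ), 1, 0) (u t0) :=
      HasDerivAt.prodMk (hasDerivAt_const _ a) (HasDerivAt.prodMk (hasDerivAt_id _) (hasDerivAt_const _ _))
    exact hFd.comp_hasDerivAt _ hγ2
  have hs3 : HasDerivAt (fun s => F a (u t0) s) (L ((0 : ℝ), 0, 1)) (v t0) := by
    have hγ3 : HasDerivAt (fun s : ℝ => ((a, u t0, s) : ℝ × ℝ × ℝ))
        ((0 : ℝ), 0, 1) (v t0) :=
      HasDerivAt.prodMk (hasDerivAt_const _ a) (HasDerivAt.prodMk (hasDerivAt_const _ _) (hasDerivAt_id _))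
    exact hFd.comp_hasDerivAt _ hγ3
  rw [hcomp.deriv, hs2.deriv, hs3.deriv]
  have : ((0 : ℝ), deriv u t0, deriv v t0) =
      deriv u t0 • ((0 : ℝ), (1:ℝ), (0:ℝ)) + deriv v t0 • ((0:ℝ), (0:ℝ), (1:ℝ)) := by
    simp [Prod.ext_iff]
  rw [this, map_add, map_smul, map_smul, smul_eq_mul, smul_eq_mul]
private lemma pair_zero (p q X Y : ℝ) (hp : p ≠ 0) (hq : q ≠ 0)
    (e : p*X + q*Y = 0) : (X = 0 ↔ Y = 0) := by
  constructor <;> intro h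
  · have h2 : q*Y = 0 := by rw [h] at e; linarith
    exact (mul_eq_zero.mp h2).resolve_left hq
  · have h2 : p*X = 0 := by rw [h] at e; linarith
    exact (mul_eq_zero.mp h2).resolve_left hp

private lemma key_all (a2 a3 b2 b3 c2 c3 A2 A3 B2 B3 C2 C3 : ℝ)
    (hA2 : A2 ≠ 0) (hB2 : B2 ≠ 0) (hC2 : C2 ≠ 0)
    (prodsum : A2*B2*C2 + A3*B3*C3 = 0)
    (g1 : c2*B3 = b2*C2) (g2 : c3*A2 = a2*C3) (g3 : b3*A3 = a3*B2) :
    c3*b2*a3 = -(c2*b3*a2) := by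
  have key : (A2*B2*C2) * (c3*b2*a3 + c2*b3*a2) = 0 := by
    linear_combination (b2*a3*B2*C2)*g2 - (a2*a3*C3*B2)*g1 - (a2*c2*C3*B3)*g3
      + (c2*b3*a2)*prodsum
  have h := mul_ne_zero (mul_ne_zero hA2 hB2) hC2
  have h2 := (mul_eq_zero.mp key).resolve_left h
  linarith

private lemma key_algebra (a1 b1 c1 a2 a3 b2 b3 c2 c3 A2 A3 B2 B3 C2 C3 : ℝ)
    (ha1 : a1 ≠ 0) (hb1 : b1 ≠ 0) (hc1 : c1 ≠ 0)
    (e1 : c1*A2 + b1*A3 = 0) (e2 : a1*B2 + c1*B3 = 0) (e3 : b1*C2 + a1*C3 = 0)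
    (g1 : c2*B3 = b2*C2) (g2 : c3*A2 = a2*C3) (g3 : b3*A3 = a3*B2)
    (hnz : ¬(c2*B3 = 0 ∧ c3*A2 = 0 ∧ b3*A3 = 0)) :
    c3*b2*a3 = -(c2*b3*a2) := by
  have prod0 : a1*b1*c1*(A2*B2*C2 + A3*B3*C3) = 0 := by
    linear_combination (a1*B2*b1*C2)*e1 + (-(b1*A3)*b1*C2)*e2 + (b1*A3*c1*B3)*e3
  have prodsum : A2*B2*C2 + A3*B3*C3 = 0 :=
    (mul_eq_zero.mp prod0).resolve_left (mul_ne_zero (mul_ne_zero ha1 hb1) hc1)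
  have pA := pair_zero c1 b1 A2 A3 hc1 hb1 e1
  have pB := pair_zero a1 c1 B2 B3 ha1 hc1 e2
  have pC := pair_zero b1 a1 C2 C3 hb1 ha1 e3
  rcases not_and_or.mp hnz with h | h'
  · -- z1 = c2*B3 ≠ 0
    have hB3 : B3 ≠ 0 := fun hh => h (by rw [hh, mul_zero])
    have hC2 : C2 ≠ 0 := fun hh => h (by rw [g1, hh, mul_zero])
    have hB2 : B2 ≠ 0 := fun hh => hB3 (pB.mp hh)
    have hC3 : C3 ≠ 0 := fun hh => hC2 (pC.mpr hh)
    by_cases hA2 : A2 = 0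
    · have hA3 : A3 = 0 := pA.mp hA2
      have ha2 : a2 = 0 := by
        have hz : a2*C3 = 0 := by rw [← g2, hA2, mul_zero]
        exact (mul_eq_zero.mp hz).resolve_right hC3
      have ha3 : a3 = 0 := by
        have hz : a3*B2 = 0 := by rw [← g3, hA3, mul_zero]
        exact (mul_eq_zero.mp hz).resolve_right hB2
      rw [ha2, ha3]; ring
    · exact key_all a2 a3 b2 b3 c2 c3 A2 A3 B2 B3 C2 C3 hA2 hB2 hC2 prodsum g1 g2 g3
  rcases not_and_or.mp h' with h | h
  · -- z2 = c3*A2 ≠ 0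
    have hA2 : A2 ≠ 0 := fun hh => h (by rw [hh, mul_zero])
    have hC3 : C3 ≠ 0 := fun hh => h (by rw [g2, hh, mul_zero])
    have hA3 : A3 ≠ 0 := fun hh => hA2 (pA.mpr hh)
    have hC2 : C2 ≠ 0 := fun hh => hC3 (pC.mp hh)
    by_cases hB2 : B2 = 0
    · have hB3 : B3 = 0 := pB.mp hB2
      have hb2 : b2 = 0 := by
        have hz : b2*C2 = 0 := by rw [← g1, hB3, mul_zero]
        exact (mul_eq_zero.mp hz).resolve_right hC2
      have hb3 : b3 = 0 := by
        have hz : b3*A3 = 0 := by rw [g3, hB2, mul_zero]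
        exact (mul_eq_zero.mp hz).resolve_right hA3
      rw [hb2, hb3]; ring
    · exact key_all a2 a3 b2 b3 c2 c3 A2 A3 B2 B3 C2 C3 hA2 hB2 hC2 prodsum g1 g2 g3
  · -- z3 = b3*A3 ≠ 0
    have hA3 : A3 ≠ 0 := fun hh => h (by rw [hh, mul_zero])
    have hB2 : B2 ≠ 0 := fun hh => h (by rw [g3, hh, mul_zero])
    have hA2 : A2 ≠ 0 := fun hh => hA3 (pA.mp hh)
    have hB3 : B3 ≠ 0 := fun hh => hB2 (pB.mpr hh)
    by_cases hC2 : C2 = 0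
    · have hC3 : C3 = 0 := pC.mp hC2
      have hc2 : c2 = 0 := by
        have hz : c2*B3 = 0 := by rw [g1, hC2, mul_zero]
        exact (mul_eq_zero.mp hz).resolve_right hB3
      have hc3 : c3 = 0 := by
        have hz : c3*A2 = 0 := by rw [g2, hC3, mul_zero]
        exact (mul_eq_zero.mp hz).resolve_right hA2
      rw [hc2, hc3]; ring
    · exact key_all a2 a3 b2 b3 c2 c3 A2 A3 B2 B3 C2 C3 hA2 hB2 hC2 prodsum g1 g2 g3


/-- Proposition 1 of Adler–Bobenko–Suris: if the triple of functions
`f1, f2, f3` is compatible (three-dimensionally consistent) and the resulting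
function `z(x,x1,x2,x3) = x123` satisfies the tetrahedron condition `z_x = 0`,
then `f3,x2 · f2,x1 · f1,x3 = − f3,x1 · f2,x3 · f1,x2` (under the natural
nondegeneracy assumptions on the linear system arising from differentiation). -/
theorem tetrahedron_implies_fff
    (f1 f2 f3 : ℝ → ℝ → ℝ → ℝ)
    (hd1 : Differentiable ℝ (fun p : ℝ × ℝ × ℝ => f1 p.1 p.2.1 p.2.2))
    (hd2 : Differentiable ℝ (fun p : ℝ × ℝ × ℝ => f2 p.1 p.2.1 p.2.2))
    (hd3 : Differentiable ℝ (fun p : ℝ × ℝ × ℝ => f3 p.1 p.2.1 p.2.2))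
    -- three-dimensional consistency: the three determinations of `x123` coincide,
    -- where `x23 = f1(x,x2,x3)`, `x31 = f2(x,x3,x1)`, `x12 = f3(x,x1,x2)`
    (hcons : ∀ x x1 x2 x3 : ℝ,
      f1 x1 (f3 x x1 x2) (f2 x x3 x1) = f2 x2 (f1 x x2 x3) (f3 x x1 x2) ∧
      f1 x1 (f3 x x1 x2) (f2 x x3 x1) = f3 x3 (f2 x x3 x1) (f1 x x2 x3))
    -- tetrahedron condition: `z_x = 0` identically
    (htetra : ∀ x x1 x2 x3 : ℝ,
      deriv (fun t => f1 x1 (f3 t x1 x2) (f2 t x3 x1)) x = 0)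
    (x x1 x2 x3 : ℝ)
    -- nondegeneracy: the derivatives `f_{j,x}` do not vanish at the point
    (hf1x : deriv (fun t => f1 t x2 x3) x ≠ 0)
    (hf2x : deriv (fun t => f2 t x3 x1) x ≠ 0)
    (hf3x : deriv (fun t => f3 t x1 x2) x ≠ 0)
    -- nondegeneracy: the gradient `(z_{x1}, z_{x2}, z_{x3})` does not vanish
    (hgrad : ¬ (deriv (fun t => f1 t (f3 x t x2) (f2 x x3 t)) x1 = 0 ∧
                deriv (fun t => f1 x1 (f3 x x1 t) (f2 x x3 x1)) x2 = 0 ∧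
                deriv (fun t => f1 x1 (f3 x x1 x2) (f2 x t x1)) x3 = 0)) :
    deriv (fun t => f3 x x1 t) x2 * deriv (fun t => f2 x x3 t) x1 *
        deriv (fun t => f1 x x2 t) x3 =
      -(deriv (fun t => f3 x t x2) x1 * deriv (fun t => f2 x t x1) x3 *
        deriv (fun t => f1 x t x3) x2) := by

  -- partial derivatives at the base point
  set a1 := deriv (fun t => f1 t x2 x3) x with ha1d
  set a2 := deriv (fun t => f1 x t x3) x2 with ha2d
  set a3 := deriv (fun t => f1 x x2 t) x3 with ha3d
  set b1 := deriv (fun t => f2 t x3 x1) x with hb1d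
  set b2 := deriv (fun t => f2 x x3 t) x1 with hb2d
  set b3 := deriv (fun t => f2 x t x1) x3 with hb3d
  set c1 := deriv (fun t => f3 t x1 x2) x with hc1d
  set c2 := deriv (fun t => f3 x t x2) x1 with hc2d
  set c3 := deriv (fun t => f3 x x1 t) x2 with hc3d
  -- partial derivatives at the shifted points
  set A2 := deriv (fun s => f1 x1 s (f2 x x3 x1)) (f3 x x1 x2) with hA2d
  set A3 := deriv (fun s => f1 x1 (f3 x x1 x2) s) (f2 x x3 x1) with hA3d
  set B2 := deriv (fun s => f2 x2 s (f3 x x1 x2)) (f1 x x2 x3) with hB2d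
  set B3 := deriv (fun s => f2 x2 (f1 x x2 x3) s) (f3 x x1 x2) with hB3d
  set C2 := deriv (fun s => f3 x3 s (f1 x x2 x3)) (f2 x x3 x1) with hC2d
  set C3 := deriv (fun s => f3 x3 (f2 x x3 x1) s) (f1 x x2 x3) with hC3d
  -- the three z_x equations
  have e1 : c1 * A2 + b1 * A3 = 0 := by
    have h : deriv (fun t => f1 x1 (f3 t x1 x2) (f2 t x3 x1)) x = c1 * A2 + b1 * A3 :=
      chain3 f1 hd1 x1 (fun t => f3 t x1 x2) (fun t => f2 t x3 x1) x
        ((slice1 f3 hd3 x1 x2) x) ((slice1 f2 hd2 x3 x1) x)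
    rw [htetra x x1 x2 x3] at h
    linarith
  have e2 : a1 * B2 + c1 * B3 = 0 := by
    have hfun : (fun t => f1 x1 (f3 t x1 x2) (f2 t x3 x1))
        = (fun t => f2 x2 (f1 t x2 x3) (f3 t x1 x2)) :=
      funext fun t => (hcons t x1 x2 x3).1
    have h : deriv (fun t => f2 x2 (f1 t x2 x3) (f3 t x1 x2)) x = a1 * B2 + c1 * B3 :=
      chain3 f2 hd2 x2 (fun t => f1 t x2 x3) (fun t => f3 t x1 x2) x
        ((slice1 f1 hd1 x2 x3) x) ((slice1 f3 hd3 x1 x2) x)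
    rw [← hfun, htetra x x1 x2 x3] at h
    linarith
  have e3 : b1 * C2 + a1 * C3 = 0 := by
    have hfun : (fun t => f1 x1 (f3 t x1 x2) (f2 t x3 x1))
        = (fun t => f3 x3 (f2 t x3 x1) (f1 t x2 x3)) :=
      funext fun t => (hcons t x1 x2 x3).2
    have h : deriv (fun t => f3 x3 (f2 t x3 x1) (f1 t x2 x3)) x = b1 * C2 + a1 * C3 :=
      chain3 f3 hd3 x3 (fun t => f2 t x3 x1) (fun t => f1 t x2 x3) x
        ((slice1 f2 hd2 x3 x1) x) ((slice1 f1 hd1 x2 x3) x)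
    rw [← hfun, htetra x x1 x2 x3] at h
    linarith
  -- z_{x1}
  have hz1a : deriv (fun t => f1 t (f3 x t x2) (f2 x x3 t)) x1 = c2 * B3 := by
    have hfun : (fun t => f1 t (f3 x t x2) (f2 x x3 t))
        = (fun t => f2 x2 (f1 x x2 x3) (f3 x t x2)) :=
      funext fun t => (hcons x t x2 x3).1
    have h : deriv (fun t => f2 x2 ((fun _ : ℝ => f1 x x2 x3) t) (f3 x t x2)) x1
        = deriv (fun _ : ℝ => f1 x x2 x3) x1 * B2 + c2 * B3 :=
      chain3 f2 hd2 x2 (fun _ => f1 x x2 x3) (fun t => f3 x t x2) x1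
        (differentiableAt_const _) ((slice2 f3 hd3 x x2) x1)
    simp only [deriv_const', zero_mul, zero_add] at h
    rw [hfun]
    exact h
  have hz1b : deriv (fun t => f1 t (f3 x t x2) (f2 x x3 t)) x1 = b2 * C2 := by
    have hfun : (fun t => f1 t (f3 x t x2) (f2 x x3 t))
        = (fun t => f3 x3 (f2 x x3 t) (f1 x x2 x3)) :=
      funext fun t => (hcons x t x2 x3).2
    have h : deriv (fun t => f3 x3 (f2 x x3 t) ((fun _ : ℝ => f1 x x2 x3) t)) x1
        = b2 * C2 + deriv (fun _ : ℝ => f1 x x2 x3) x1 * C3 :=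
      chain3 f3 hd3 x3 (fun t => f2 x x3 t) (fun _ => f1 x x2 x3) x1
        ((slice3 f2 hd2 x x3) x1) (differentiableAt_const _)
    simp only [deriv_const', zero_mul, add_zero] at h
    rw [hfun]
    exact h
  -- z_{x2}
  have hz2a : deriv (fun t => f1 x1 (f3 x x1 t) (f2 x x3 x1)) x2 = c3 * A2 := by
    have h : deriv (fun t => f1 x1 (f3 x x1 t) ((fun _ : ℝ => f2 x x3 x1) t)) x2
        = c3 * A2 + deriv (fun _ : ℝ => f2 x x3 x1) x2 * A3 :=
      chain3 f1 hd1 x1 (fun t => f3 x x1 t) (fun _ => f2 x x3 x1) x2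
        ((slice3 f3 hd3 x x1) x2) (differentiableAt_const _)
    simp only [deriv_const', zero_mul, add_zero] at h
    exact h
  have hz2b : deriv (fun t => f1 x1 (f3 x x1 t) (f2 x x3 x1)) x2 = a2 * C3 := by
    have hfun : (fun t => f1 x1 (f3 x x1 t) (f2 x x3 x1))
        = (fun t => f3 x3 (f2 x x3 x1) (f1 x t x3)) :=
      funext fun t => (hcons x x1 t x3).2
    have h : deriv (fun t => f3 x3 ((fun _ : ℝ => f2 x x3 x1) t) (f1 x t x3)) x2
        = deriv (fun _ : ℝ => f2 x x3 x1) x2 * C2 + a2 * C3 :=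
      chain3 f3 hd3 x3 (fun _ => f2 x x3 x1) (fun t => f1 x t x3) x2
        (differentiableAt_const _) ((slice2 f1 hd1 x x3) x2)
    simp only [deriv_const', zero_mul, zero_add] at h
    rw [hfun]
    exact h
  -- z_{x3}
  have hz3a : deriv (fun t => f1 x1 (f3 x x1 x2) (f2 x t x1)) x3 = b3 * A3 := by
    have h : deriv (fun t => f1 x1 ((fun _ : ℝ => f3 x x1 x2) t) (f2 x t x1)) x3
        = deriv (fun _ : ℝ => f3 x x1 x2) x3 * A2 + b3 * A3 :=
      chain3 f1 hd1 x1 (fun _ => f3 x x1 x2) (fun t => f2 x t x1) x3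
        (differentiableAt_const _) ((slice2 f2 hd2 x x1) x3)
    simp only [deriv_const', zero_mul, zero_add] at h
    exact h
  have hz3b : deriv (fun t => f1 x1 (f3 x x1 x2) (f2 x t x1)) x3 = a3 * B2 := by
    have hfun : (fun t => f1 x1 (f3 x x1 x2) (f2 x t x1))
        = (fun t => f2 x2 (f1 x x2 t) (f3 x x1 x2)) :=
      funext fun t => (hcons x x1 x2 t).1
    have h : deriv (fun t => f2 x2 (f1 x x2 t) ((fun _ : ℝ => f3 x x1 x2) t)) x3
        = a3 * B2 + deriv (fun _ : ℝ => f3 x x1 x2) x3 * B3 :=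
      chain3 f2 hd2 x2 (fun t => f1 x x2 t) (fun _ => f3 x x1 x2) x3
        ((slice3 f1 hd1 x x2) x3) (differentiableAt_const _)
    simp only [deriv_const', zero_mul, add_zero] at h
    rw [hfun]
    exact h
  have g1 : c2 * B3 = b2 * C2 := by rw [← hz1a, hz1b]
  have g2 : c3 * A2 = a2 * C3 := by rw [← hz2a, hz2b]
  have g3 : b3 * A3 = a3 * B2 := by rw [← hz3a, hz3b]
  rw [hz1a, hz2a, hz3a] at hgrad
  exact key_algebra a1 b1 c1 a2 a3 b2 b3 c2 c3 A2 A3 B2 B3 C2 C3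
    hf1x hf2x hf3x e1 e2 e3 g1 g2 g3 hgrad
end

section
/- Let Q(x,u,v,y) be a polynomial that is affine linear in each of its four arguments (so Q_uu = 0, Q_vv = 0, Q_yy = 0, etc.). Then the three 'discriminant-like' expressions coincide: the discriminant in u of g(x,u) = Q·Q_yv − Q_y·Q_v, the discriminant in v of ḡ(x,v) = Q·Q_yu − Q_y·Q_u, and the discriminant in y of G(x,y) = Q·Q_uv − Q_u·Q_v are all equal, i.e. g_u² − 2g·g_uu = ḡ_v² − 2ḡ·ḡ_vv = G_y² − 2G·G_yy. -/
/-- Partial derivative of a function of four complex variables in the first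
argument. -/
noncomputable def pdX (f : ℂ → ℂ → ℂ → ℂ → ℂ) : ℂ → ℂ → ℂ → ℂ → ℂ :=
  fun x u v y => deriv (fun t => f t u v y) x

/-- Partial derivative in the second argument. -/
noncomputable def pdU (f : ℂ → ℂ → ℂ → ℂ → ℂ) : ℂ → ℂ → ℂ → ℂ → ℂ :=
  fun x u v y => deriv (fun t => f x t v y) u

/-- Partial derivative in the third argument. -/
noncomputable def pdV (f : ℂ → ℂ → ℂ → ℂ → ℂ) : ℂ → ℂ → ℂ → ℂ → ℂ :=
  fun x u v y => deriv (fun t => f x u t y) v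

/-- Partial derivative in the fourth argument. -/
noncomputable def pdY (f : ℂ → ℂ → ℂ → ℂ → ℂ) : ℂ → ℂ → ℂ → ℂ → ℂ :=
  fun x u v y => deriv (fun t => f x u v t) y

/-- The biquadratic `g(x,u) = Q·Q_yv − Q_y·Q_v` associated to the edge `(x,u)`. -/
noncomputable def edgeG (Q : ℂ → ℂ → ℂ → ℂ → ℂ) : ℂ → ℂ → ℂ → ℂ → ℂ :=
  fun x u v y => Q x u v y * pdV (pdY Q) x u v y - pdY Q x u v y * pdV Q x u v y

/-- The biquadratic `ḡ(x,v) = Q·Q_yu − Q_y·Q_u` associated to the edge `(x,v)`. -/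
noncomputable def edgeGbar (Q : ℂ → ℂ → ℂ → ℂ → ℂ) : ℂ → ℂ → ℂ → ℂ → ℂ :=
  fun x u v y => Q x u v y * pdU (pdY Q) x u v y - pdY Q x u v y * pdU Q x u v y

/-- The biquadratic `G(x,y) = Q·Q_uv − Q_u·Q_v` associated to the diagonal `(x,y)`. -/
noncomputable def diagG (Q : ℂ → ℂ → ℂ → ℂ → ℂ) : ℂ → ℂ → ℂ → ℂ → ℂ :=
  fun x u v y => Q x u v y * pdU (pdV Q) x u v y - pdU Q x u v y * pdV Q x u v y

/-- Discriminant `f_u² − 2 f·f_uu` with respect to the second argument. -/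
noncomputable def discU (f : ℂ → ℂ → ℂ → ℂ → ℂ) : ℂ → ℂ → ℂ → ℂ → ℂ :=
  fun x u v y => (pdU f x u v y) ^ 2 - 2 * f x u v y * pdU (pdU f) x u v y

/-- Discriminant with respect to the third argument. -/
noncomputable def discV (f : ℂ → ℂ → ℂ → ℂ → ℂ) : ℂ → ℂ → ℂ → ℂ → ℂ :=
  fun x u v y => (pdV f x u v y) ^ 2 - 2 * f x u v y * pdV (pdV f) x u v y

/-- Discriminant with respect to the fourth argument. -/
noncomputable def discY (f : ℂ → ℂ → ℂ → ℂ → ℂ) : ℂ → ℂ → ℂ → ℂ → ℂ :=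
  fun x u v y => (pdY f x u v y) ^ 2 - 2 * f x u v y * pdY (pdY f) x u v y

/-!
For fixed `x`, `Q` is trilinear in `(u, v, y)` with a `2 × 2 × 2` coefficient array `a`. Singling
out one of these variables `w` and calling the other two `s, t`, write
`Q = P₀₀ + P₁₀ s + P₀₁ t + P₁₁ s t`, where the entries of the matrix `P` are affine in `w`. Then
`Q·Q_st − Q_s·Q_t = det P`, a quadratic in `w` whose discriminant is Cayley's hyperdeterminant
of `a`. The hyperdeterminant is invariant under permutations of the three axes of `a`, so the
three discriminants agree.
-/

section Calculus

variable {𝕜 : Type*} [NontriviallyNormedField 𝕜]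

theorem deriv_eq_of_affine {f : 𝕜 → 𝕜} {a b : 𝕜} (hf : ∀ t, f t = a * t + b) (t : 𝕜) :
    deriv f t = a := by
  rw [funext hf]
  simp

theorem deriv_sq_sub_two_mul_deriv_deriv_of_quadratic {p : 𝕜 → 𝕜} {a b c : 𝕜}
    (hp : ∀ t, p t = a * t ^ 2 + b * t + c) (t : 𝕜) :
    deriv p t ^ 2 - 2 * p t * deriv (deriv p) t = discrim a b c := by
  have hp' : ∀ t, deriv p t = 2 * a * t + b := fun t => by
    rw [funext hp]
    simpa [mul_comm, mul_left_comm] using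
      (((hasDerivAt_pow 2 t).const_mul a).add ((hasDerivAt_id t).const_mul b)).add_const c |>.deriv
  rw [hp', deriv_eq_of_affine hp', hp, discrim]
  ring

end Calculus

section Hyperdeterminant

variable {R : Type*} [CommRing R]

def trilinear (a : Fin 2 → Fin 2 → Fin 2 → R) (w s t : R) : R :=
  ∑ i, ∑ j, ∑ k, a i j k * w ^ (i : ℕ) * s ^ (j : ℕ) * t ^ (k : ℕ)

theorem trilinear_eq (a : Fin 2 → Fin 2 → Fin 2 → R) (w s t : R) :
    trilinear a w s t = a 0 0 0 + a 1 0 0 * w + a 0 1 0 * s + a 0 0 1 * t + a 1 1 0 * w * s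
      + a 1 0 1 * w * t + a 0 1 1 * s * t + a 1 1 1 * w * s * t := by
  simp only [trilinear, Fin.sum_univ_two, Fin.isValue, Fin.coe_ofNat_eq_mod, Nat.zero_mod,
    pow_zero, mul_one, Nat.mod_succ, pow_one]
  ring

theorem trilinear_swap (a : Fin 2 → Fin 2 → Fin 2 → R) (w s t : R) :
    trilinear (fun i j k => a j i k) w s t = trilinear a s w t := by
  simp only [trilinear_eq]; ring

theorem trilinear_rotate (a : Fin 2 → Fin 2 → Fin 2 → R) (w s t : R) :
    trilinear (fun i j k => a j k i) w s t = trilinear a s t w := by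
  simp only [trilinear_eq]; ring

/-- Cayley's hyperdeterminant. -/
def hyperdet (a : Fin 2 → Fin 2 → Fin 2 → R) : R :=
  a 0 0 0 ^ 2 * a 1 1 1 ^ 2 + a 0 0 1 ^ 2 * a 1 1 0 ^ 2 + a 0 1 0 ^ 2 * a 1 0 1 ^ 2
    + a 1 0 0 ^ 2 * a 0 1 1 ^ 2
    - 2 * (a 0 0 0 * a 0 0 1 * a 1 1 0 * a 1 1 1 + a 0 0 0 * a 0 1 0 * a 1 0 1 * a 1 1 1
      + a 0 0 0 * a 1 0 0 * a 0 1 1 * a 1 1 1 + a 0 0 1 * a 0 1 0 * a 1 0 1 * a 1 1 0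
      + a 0 0 1 * a 1 0 0 * a 0 1 1 * a 1 1 0 + a 0 1 0 * a 1 0 0 * a 0 1 1 * a 1 0 1)
    + 4 * (a 0 0 0 * a 0 1 1 * a 1 0 1 * a 1 1 0 + a 0 0 1 * a 0 1 0 * a 1 0 0 * a 1 1 1)

theorem hyperdet_swap (a : Fin 2 → Fin 2 → Fin 2 → R) :
    hyperdet (fun i j k => a j i k) = hyperdet a := by
  simp only [hyperdet]; ring

theorem hyperdet_rotate (a : Fin 2 → Fin 2 → Fin 2 → R) :
    hyperdet (fun i j k => a j k i) = hyperdet a := by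
  simp only [hyperdet]; ring

def pencil (a : Fin 2 → Fin 2 → Fin 2 → R) (w : R) : Matrix (Fin 2) (Fin 2) R :=
  Matrix.of fun j k => a 0 j k + a 1 j k * w

theorem trilinear_eq_pencil (a : Fin 2 → Fin 2 → Fin 2 → R) (w s t : R) :
    trilinear a w s t = pencil a w 0 0 + pencil a w 1 0 * s + pencil a w 0 1 * t
      + pencil a w 1 1 * s * t := by
  simp only [trilinear_eq, pencil, Matrix.of_apply]
  ring

theorem det_pencil (a : Fin 2 → Fin 2 → Fin 2 → R) (w : R) :
    (pencil a w).det = (a 1 0 0 * a 1 1 1 - a 1 0 1 * a 1 1 0) * w ^ 2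
      + (a 0 0 0 * a 1 1 1 + a 1 0 0 * a 0 1 1 - a 0 0 1 * a 1 1 0 - a 1 0 1 * a 0 1 0) * w
      + (a 0 0 0 * a 0 1 1 - a 0 0 1 * a 0 1 0) := by
  simp only [pencil, Matrix.det_fin_two, Matrix.of_apply]
  ring

theorem discrim_det_pencil (a : Fin 2 → Fin 2 → Fin 2 → R) :
    discrim (a 1 0 0 * a 1 1 1 - a 1 0 1 * a 1 1 0)
      (a 0 0 0 * a 1 1 1 + a 1 0 0 * a 0 1 1 - a 0 0 1 * a 1 1 0 - a 1 0 1 * a 0 1 0)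
      (a 0 0 0 * a 0 1 1 - a 0 0 1 * a 0 1 0) = hyperdet a := by
  simp only [discrim, hyperdet]
  ring

end Hyperdeterminant

section Trilinear

variable {𝕜 : Type*} [NontriviallyNormedField 𝕜]

noncomputable def mixedDet (F : 𝕜 → 𝕜 → 𝕜 → 𝕜) (w s t : 𝕜) : 𝕜 :=
  F w s t * deriv (fun s' => deriv (fun t' => F w s' t') t) s
    - deriv (fun t' => F w s t') t * deriv (fun s' => F w s' t) s

variable {F : 𝕜 → 𝕜 → 𝕜 → 𝕜} {a : Fin 2 → Fin 2 → Fin 2 → 𝕜}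

theorem mixedDet_eq_det_pencil (hF : ∀ w s t, F w s t = trilinear a w s t) (w s t : 𝕜) :
    mixedDet F w s t = (pencil a w).det := by
  set P := pencil a w
  have hF' : ∀ s t, F w s t = P 0 0 + P 1 0 * s + P 0 1 * t + P 1 1 * s * t := fun s t => by
    rw [hF, trilinear_eq_pencil]
  have hFt : ∀ s', deriv (fun t' => F w s' t') t = P 0 1 + P 1 1 * s' := fun s' =>
    deriv_eq_of_affine (b := P 0 0 + P 1 0 * s') (fun t' => by rw [hF']; ring) t
  have hFs : deriv (fun s' => F w s' t) s = P 1 0 + P 1 1 * t :=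
    deriv_eq_of_affine (b := P 0 0 + P 0 1 * t) (fun s' => by rw [hF']; ring) s
  have hFst : deriv (fun s' => deriv (fun t' => F w s' t') t) s = P 1 1 :=
    deriv_eq_of_affine (b := P 0 1) (fun s' => by rw [hFt]; ring) s
  rw [mixedDet, hFst, hFt, hFs, hF', Matrix.det_fin_two]
  ring

theorem discrim_mixedDet_eq_hyperdet (hF : ∀ w s t, F w s t = trilinear a w s t)
    (w s t : 𝕜) :
    deriv (fun w => mixedDet F w s t) w ^ 2
      - 2 * mixedDet F w s t * deriv (deriv fun w => mixedDet F w s t) w = hyperdet a := by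
  rw [deriv_sq_sub_two_mul_deriv_deriv_of_quadratic (fun w => by
    rw [mixedDet_eq_det_pencil hF, det_pencil]), discrim_det_pencil]

end Trilinear

/-- Lemma on coinciding discriminants: for a polynomial `Q(x,u,v,y)` which is
affine linear in each of its four arguments, the discriminants (in `u`, `v`, `y`
respectively) of `g = Q·Q_yv − Q_y·Q_v`, `ḡ = Q·Q_yu − Q_y·Q_u` and
`G = Q·Q_uv − Q_u·Q_v` all coincide. -/
theorem discriminants_coincide
    (Q : ℂ → ℂ → ℂ → ℂ → ℂ)
    (hQ : ∃ c1 c2 c3 c4 c5 c6 c7 c8 c9 c10 c11 c12 c13 c14 c15 c16 : ℂ,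
      ∀ x u v y : ℂ, Q x u v y =
        c1*x*u*v*y + c2*x*u*v + c3*x*u*y + c4*x*v*y + c5*u*v*y +
        c6*x*u + c7*x*v + c8*x*y + c9*u*v + c10*u*y + c11*v*y +
        c12*x + c13*u + c14*v + c15*y + c16) :
    ∀ x u v y : ℂ,
      discU (edgeG Q) x u v y = discV (edgeGbar Q) x u v y ∧
      discV (edgeGbar Q) x u v y = discY (diagG Q) x u v y := by
  obtain ⟨c1, c2, c3, c4, c5, c6, c7, c8, c9, c10, c11, c12, c13, c14, c15, c16, hQ⟩ := hQ
  intro x u v y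
  let a : Fin 2 → Fin 2 → Fin 2 → ℂ :=
    ![![![c16 + c12 * x, c15 + c8 * x], ![c14 + c7 * x, c11 + c4 * x]],
      ![![c13 + c6 * x, c10 + c3 * x], ![c9 + c2 * x, c5 + c1 * x]]]
  have hQa : ∀ u v y, Q x u v y = trilinear a u v y := fun u v y => by
    rw [hQ, trilinear_eq]
    simp only [Fin.isValue, Matrix.cons_val', Matrix.cons_val_zero, Matrix.cons_val_fin_one,
      Matrix.cons_val_one, a]
    ring
  have hU : discU (edgeG Q) x u v y = hyperdet a :=
    discrim_mixedDet_eq_hyperdet (F := fun u v y => Q x u v y) hQa u v y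
  have hV : discV (edgeGbar Q) x u v y = hyperdet a := by
    rw [← hyperdet_swap]
    exact discrim_mixedDet_eq_hyperdet (F := fun v u y => Q x u v y)
      (fun v u y => by rw [trilinear_swap, hQa]) v u y
  have hY : discY (diagG Q) x u v y = hyperdet a := by
    have hG : diagG Q = fun x u v y => mixedDet (fun y u v => Q x u v y) y u v := by
      ext x u v y; exact congrArg (_ - ·) (mul_comm _ _)
    rw [← hyperdet_rotate, hG]
    exact discrim_mixedDet_eq_hyperdet (F := fun y u v => Q x u v y)
      (fun y u v => by rw [trilinear_rotate, hQa]) y u v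
  exact ⟨hU.trans hV.symm, hV.trans hY.symm⟩
end

section
/- The equation (H1): (x−y)(u−v) + β − α = 0 is three-dimensionally consistent with the tetrahedron property, and the consistent value is x123 = ((α1−α2)x1x2 + (α2−α3)x2x3 + (α3−α1)x3x1)/((α3−α2)x1 + (α1−α3)x2 + (α2−α1)x3). -/
/-!
Multiplying the face equation at `x123` through `x1` by the denominator `D` and using the two
faces at `x` through `x1` to eliminate `x` leaves `(x123 * D - N) * (x12 - x31) = 0`, where `N`
is the numerator. The factor `x12 - x31` cannot vanish, since that face would then force
`α2 = α3`. The other two determinations are the cyclic shifts `1 → 2 → 3 → 1` of the first,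
under which `N` and `D` are invariant.
-/

section H1

variable {K : Type*} [Field K] {x x1 x2 x3 x12 x31 y α1 α2 α3 : K}

theorem H1_apex_mul_denominator_eq
    (h12 : (x - x12) * (x1 - x2) + α2 - α1 = 0)
    (h31 : (x - x31) * (x3 - x1) + α1 - α3 = 0)
    (hf : (x1 - y) * (x12 - x31) + α3 - α2 = 0) (hα : α2 ≠ α3) :
    y * ((α3 - α2) * x1 + (α1 - α3) * x2 + (α2 - α1) * x3) =
      (α1 - α2) * x1 * x2 + (α2 - α3) * x2 * x3 + (α3 - α1) * x3 * x1 := by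
  have hx : x12 - x31 ≠ 0 := fun h => hα (by linear_combination (x1 - y) * h - hf)
  refine mul_right_cancel₀ hx ?_
  linear_combination -((α3 - α2) * x1 + (α1 - α3) * x2 + (α2 - α1) * x3) * hf -
    (α3 - α2) * (x1 - x3) * h12 - (α3 - α2) * (x1 - x2) * h31

end H1

/-- Equation (H1): `(x−y)(u−v) + β − α = 0` is three-dimensionally consistent
with the tetrahedron property: the three determinations `y1, y2, y3` of `x123`
from the three faces adjacent to `x123` coincide and equal
`((α1−α2)x1x2 + (α2−α3)x2x3 + (α3−α1)x3x1)/((α3−α2)x1 + (α1−α3)x2 + (α2−α1)x3)`,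
which does not involve `x`. -/
theorem H1_three_dimensional_consistency
    (x x1 x2 x3 x12 x23 x31 y1 y2 y3 α1 α2 α3 : ℂ)
    (h12ne : α1 ≠ α2) (h23ne : α2 ≠ α3) (h31ne : α3 ≠ α1)
    -- (H1) on the three faces adjacent to `x`
    (h12 : (x - x12) * (x1 - x2) + α2 - α1 = 0)
    (h23 : (x - x23) * (x2 - x3) + α3 - α2 = 0)
    (h31 : (x - x31) * (x3 - x1) + α1 - α3 = 0)
    -- (H1) on the three faces adjacent to `x123`
    (hf1 : (x1 - y1) * (x12 - x31) + α3 - α2 = 0)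
    (hf2 : (x2 - y2) * (x23 - x12) + α1 - α3 = 0)
    (hf3 : (x3 - y3) * (x31 - x23) + α2 - α1 = 0)
    (hD : (α3 - α2) * x1 + (α1 - α3) * x2 + (α2 - α1) * x3 ≠ 0) :
    y1 = ((α1 - α2) * x1 * x2 + (α2 - α3) * x2 * x3 + (α3 - α1) * x3 * x1) /
        ((α3 - α2) * x1 + (α1 - α3) * x2 + (α2 - α1) * x3) ∧
    y2 = ((α1 - α2) * x1 * x2 + (α2 - α3) * x2 * x3 + (α3 - α1) * x3 * x1) /
        ((α3 - α2) * x1 + (α1 - α3) * x2 + (α2 - α1) * x3) ∧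
    y3 = ((α1 - α2) * x1 * x2 + (α2 - α3) * x2 * x3 + (α3 - α1) * x3 * x1) /
        ((α3 - α2) * x1 + (α1 - α3) * x2 + (α2 - α1) * x3) := by
  have key1 := H1_apex_mul_denominator_eq h12 h31 hf1 h23ne
  have key2 := H1_apex_mul_denominator_eq h23 h12 hf2 h31ne
  have key3 := H1_apex_mul_denominator_eq h31 h23 hf3 h12ne
  refine ⟨?_, ?_, ?_⟩ <;> rw [eq_div_iff hD]
  · exact key1
  · linear_combination key2
  · linear_combination key3
end

section
/- The equation (H3) with δ=0, namely α(xu+vy) − β(xv+uy) = 0 (the Hirota equation), is three-dimensionally consistent; writing ℓij = αi/αj, one has x123 = ((ℓ21−ℓ12)x1x2 + (ℓ32−ℓ23)x2x3 + (ℓ13−ℓ31)x3x1)/((ℓ23−ℓ32)x1 + (ℓ31−ℓ13)x2 + (ℓ12−ℓ21)x3), independent of x. -/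
/-- Equation (H3) with `δ = 0` (the Hirota equation):
`α(xu+vy) − β(xv+uy) = 0` is three-dimensionally consistent, and writing
`ℓij = αi/αj`, the common value of `x123` is
`((ℓ21−ℓ12)x1x2 + (ℓ32−ℓ23)x2x3 + (ℓ13−ℓ31)x3x1) /
 ((ℓ23−ℓ32)x1 + (ℓ31−ℓ13)x2 + (ℓ12−ℓ21)x3)`, independent of `x`. -/
theorem Hirota_three_dimensional_consistency
    (x x1 x2 x3 x12 x23 x31 y1 y2 y3 α1 α2 α3 : ℂ)
    (hα1 : α1 ≠ 0) (hα2 : α2 ≠ 0) (hα3 : α3 ≠ 0)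
    (h12ne : α1 ≠ α2) (h23ne : α2 ≠ α3) (h31ne : α3 ≠ α1)
    -- the Hirota equation on the three faces adjacent to `x`
    (h12 : α1 * (x * x1 + x2 * x12) - α2 * (x * x2 + x1 * x12) = 0)
    (h23 : α2 * (x * x2 + x3 * x23) - α3 * (x * x3 + x2 * x23) = 0)
    (h31 : α3 * (x * x3 + x1 * x31) - α1 * (x * x1 + x3 * x31) = 0)
    -- the Hirota equation on the three faces adjacent to `x123`
    (hf1 : α2 * (x1 * x12 + x31 * y1) - α3 * (x1 * x31 + x12 * y1) = 0)
    (hf2 : α3 * (x2 * x23 + x12 * y2) - α1 * (x2 * x12 + x23 * y2) = 0)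
    (hf3 : α1 * (x3 * x31 + x23 * y3) - α2 * (x3 * x23 + x31 * y3) = 0)
    -- nondegeneracy: the coefficients of `x12, x23, x31` are nonzero
    (hc12 : α1 * x2 - α2 * x1 ≠ 0)
    (hc23 : α2 * x3 - α3 * x2 ≠ 0)
    (hc31 : α3 * x1 - α1 * x3 ≠ 0)
    -- nondegeneracy: the coefficients of `y1, y2, y3` are nonzero
    (hcf1 : α2 * x31 - α3 * x12 ≠ 0)
    (hcf2 : α3 * x12 - α1 * x23 ≠ 0)
    (hcf3 : α1 * x23 - α2 * x31 ≠ 0)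
    (hD : (α2/α3 - α3/α2) * x1 + (α3/α1 - α1/α3) * x2 + (α1/α2 - α2/α1) * x3 ≠ 0) :
    y1 = ((α2/α1 - α1/α2) * x1 * x2 + (α3/α2 - α2/α3) * x2 * x3 +
          (α1/α3 - α3/α1) * x3 * x1) /
        ((α2/α3 - α3/α2) * x1 + (α3/α1 - α1/α3) * x2 + (α1/α2 - α2/α1) * x3) ∧
    y1 = y2 ∧ y2 = y3 := by
  -- abbreviations (cleared denominators)
  set Dp : ℂ := α1*α2^2*x1 - α1*α3^2*x1 + α2*α3^2*x2 - α2*α1^2*x2 + α3*α1^2*x3 - α3*α2^2*x3 with hDp_def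
  set Np : ℂ := α3*α2^2*(x1*x2) - α3*α1^2*(x1*x2) + α1*α3^2*(x2*x3) - α1*α2^2*(x2*x3) + α2*α1^2*(x3*x1) - α2*α3^2*(x3*x1) with hNp_def
  have k12 : x12 * (α1*x2 - α2*x1) = x*(α2*x2 - α1*x1) := by linear_combination h12
  have k23 : x23 * (α2*x3 - α3*x2) = x*(α3*x3 - α2*x2) := by linear_combination h23
  have k31 : x31 * (α3*x1 - α1*x3) = x*(α1*x1 - α3*x3) := by linear_combination h31
  -- product identities giving nondegeneracy
  have prod1 : (α2*x31 - α3*x12) * ((α3*x1-α1*x3)*(α1*x2-α2*x1)) = -(x * (x1 * Dp)) := by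
    rw [hDp_def]; linear_combination α2*(α1*x2-α2*x1)*k31 - α3*(α3*x1-α1*x3)*k12
  have prod2 : (α3*x12 - α1*x23) * ((α1*x2-α2*x1)*(α2*x3-α3*x2)) = -(x * (x2 * Dp)) := by
    rw [hDp_def]; linear_combination α3*(α2*x3-α3*x2)*k12 - α1*(α1*x2-α2*x1)*k23
  have hne1 : x * (x1 * Dp) ≠ 0 := by
    have h := mul_ne_zero hcf1 (mul_ne_zero hc31 hc12)
    rw [prod1] at h
    exact neg_ne_zero.mp h
  have hne2 : x * (x2 * Dp) ≠ 0 := by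
    have h := mul_ne_zero hcf2 (mul_ne_zero hc12 hc23)
    rw [prod2] at h
    exact neg_ne_zero.mp h
  have hx : x ≠ 0 := fun h => hne1 (by rw [h, zero_mul])
  have hx1 : x1 ≠ 0 := fun h => hne1 (by rw [h, zero_mul, mul_zero])
  have hx2 : x2 ≠ 0 := fun h => hne2 (by rw [h, zero_mul, mul_zero])
  have hDpne : Dp ≠ 0 := fun h => hne1 (by rw [h, mul_zero, mul_zero])
  -- the three determinations of x123
  have K1 : (x * x1) * (y1 * Dp) = (x * x1) * Np := by
    rw [hDp_def, hNp_def]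
    linear_combination -(((α3*x1-α1*x3)*(α1*x2-α2*x1))*hf1
      + (-(x2*y1*α1*α2) + x1*y1*α2^2 + x1*x2*α1*α3 - x1^2*α2*α3)*k31
      + (-(x3*y1*α1*α3) + x1*y1*α3^2 + x1*x3*α1*α2 - x1^2*α2*α3)*k12)
  have K2 : (x * x2) * (y2 * Dp) = (x * x2) * Np := by
    rw [hDp_def, hNp_def]
    linear_combination -(((α1*x2-α2*x1)*(α2*x3-α3*x2))*hf2
      + (-(x3*y2*α2*α3) + x2*y2*α3^2 + x2*x3*α1*α2 - x2^2*α1*α3)*k12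
      + (x2*y2*α1^2 - x2^2*α1*α3 - x1*y2*α1*α2 + x1*x2*α2*α3)*k23)
  have K3 : (x * x3) * (y3 * Dp) = (x * x3) * Np := by
    rw [hDp_def, hNp_def]
    linear_combination -(((α2*x3-α3*x2)*(α3*x1-α1*x3))*hf3
      + (x3*y3*α1^2 - x3^2*α1*α2 - x1*y3*α1*α3 + x1*x3*α2*α3)*k23
      + (x3*y3*α2^2 - x3^2*α1*α2 - x2*y3*α2*α3 + x2*x3*α1*α3)*k31)
  have hx3 : x3 ≠ 0 := by
    have prod3 : (α1*x23 - α2*x31) * ((α2*x3-α3*x2)*(α3*x1-α1*x3)) = -(x * (x3 * Dp)) := by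
      rw [hDp_def]; linear_combination α1*(α3*x1-α1*x3)*k23 - α2*(α2*x3-α3*x2)*k31
    have h := mul_ne_zero hcf3 (mul_ne_zero hc23 hc31)
    rw [prod3] at h
    have h' := neg_ne_zero.mp h
    exact fun hh => h' (by rw [hh, zero_mul, mul_zero])
  have E1 : y1 * Dp = Np := mul_left_cancel₀ (mul_ne_zero hx hx1) K1
  have E2 : y2 * Dp = Np := mul_left_cancel₀ (mul_ne_zero hx hx2) K2
  have E3 : y3 * Dp = Np := mul_left_cancel₀ (mul_ne_zero hx hx3) K3
  refine ⟨?_, ?_, ?_⟩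
  · rw [eq_div_iff hD]
    field_simp
    rw [hDp_def, hNp_def] at E1
    linear_combination E1
  · exact mul_right_cancel₀ hDpne (E1.trans E2.symm)
  · exact mul_right_cancel₀ hDpne (E2.trans E3.symm)
end

section
/- The generalized H1-type equation Q = (x−y)(u−v) + k(α,β) with an arbitrary antisymmetric function k is three-dimensionally consistent (with x123 = (k(α1,α2)x1x2 + k(α2,α3)x2x3 + k(α3,α1)x3x1)/(k(α3,α2)x1 + k(α1,α3)x2 + k(α2,α1)x3)) if and only if k satisfies k(α1,α2) + k(α2,α3) + k(α3,α1) = 0 for all α1,α2,α3. -/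
open Polynomial

/-- The generalized H1-type equation `(x−y)(u−v) + k(α,β) = 0` with an
antisymmetric function `k` (nonzero on distinct arguments) is
three-dimensionally consistent — with
`x123 = (k(α1,α2)x1x2 + k(α2,α3)x2x3 + k(α3,α1)x3x1) /
        (k(α3,α2)x1 + k(α1,α3)x2 + k(α2,α1)x3)` —
if and only if `k(α1,α2) + k(α2,α3) + k(α3,α1) = 0` for all `α1, α2, α3`. -/
theorem generalized_H1_consistent_iff_cocycle
    (k : ℂ → ℂ → ℂ)
    (hanti : ∀ a b, k b a = -k a b)
    (hnz : ∀ a b, a ≠ b → k a b ≠ 0) :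
    (∀ α1 α2 α3 x x1 x2 x3 x12 x23 x31 y1 y2 y3 : ℂ,
      α1 ≠ α2 → α2 ≠ α3 → α3 ≠ α1 →
      (x - x12) * (x1 - x2) + k α1 α2 = 0 →
      (x - x23) * (x2 - x3) + k α2 α3 = 0 →
      (x - x31) * (x3 - x1) + k α3 α1 = 0 →
      (x1 - y1) * (x12 - x31) + k α2 α3 = 0 →
      (x2 - y2) * (x23 - x12) + k α3 α1 = 0 →
      (x3 - y3) * (x31 - x23) + k α1 α2 = 0 →
      k α3 α2 * x1 + k α1 α3 * x2 + k α2 α1 * x3 ≠ 0 →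
      (y1 = (k α1 α2 * x1 * x2 + k α2 α3 * x2 * x3 + k α3 α1 * x3 * x1) /
            (k α3 α2 * x1 + k α1 α3 * x2 + k α2 α1 * x3) ∧
       y1 = y2 ∧ y2 = y3))
    ↔ (∀ α1 α2 α3 : ℂ, k α1 α2 + k α2 α3 + k α3 α1 = 0) := by
  have hkaa : ∀ a, k a a = 0 := fun a => by linear_combination (1/2 : ℂ) * hanti a a
  constructor
  · intro H α1 α2 α3
    by_cases h12 : α1 = α2
    · subst h12; linear_combination hkaa α1 + hanti α1 α3
    by_cases h23 : α2 = α3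
    · subst h23; linear_combination hkaa α2 + hanti α2 α1
    by_cases h31 : α3 = α1
    · subst h31; linear_combination hkaa α3 + hanti α3 α2
    set a := k α1 α2 with ha_def
    set b := k α2 α3 with hb_def
    set c := k α3 α1 with hc_def
    have ha0 : a ≠ 0 := hnz _ _ h12
    have hb0 : b ≠ 0 := hnz _ _ h23
    have hc0 : c ≠ 0 := hnz _ _ h31
    -- choose a generic parameter t
    set p : Polynomial ℂ :=
      X * (X - C 1) * (C a - C (a + c) * X) * (C b * X + C a) *
        (C b * X - C (c + b)) * (C b * X ^ 2 + C (a + c - b) * X - C a) with hp_def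
    have hp : p ≠ 0 := by
      apply mul_ne_zero
      apply mul_ne_zero
      apply mul_ne_zero
      apply mul_ne_zero
      apply mul_ne_zero
      · exact X_ne_zero
      · exact X_sub_C_ne_zero 1
      · intro h
        apply ha0
        have := congrArg (Polynomial.eval 0) h
        simpa using this
      · intro h
        apply ha0
        have := congrArg (Polynomial.eval 0) h
        simpa using this
      · intro h
        apply hb0
        have := congrArg (fun q : Polynomial ℂ => Polynomial.coeff q 1) h
        simpa using this
      · intro h
        apply ha0
        have := congrArg (Polynomial.eval 0) h
        simpa using this
    have hfin : {x : ℂ | p.IsRoot x}.Finite := Polynomial.finite_setOf_isRoot hp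
    obtain ⟨t, ht⟩ := hfin.infinite_compl.nonempty
    have heval : Polynomial.eval t p ≠ 0 := ht
    rw [hp_def] at heval
    simp only [Polynomial.eval_mul, Polynomial.eval_add, Polynomial.eval_sub,
      Polynomial.eval_pow, Polynomial.eval_X, Polynomial.eval_C, Polynomial.eval_one,
      mul_ne_zero_iff] at heval
    obtain ⟨⟨⟨⟨⟨ht0, ht1⟩, hT1⟩, hT2⟩, hT3⟩, hQ⟩ := heval
    have ht1' : (1 : ℂ) - t ≠ 0 := fun h => ht1 (by linear_combination -h)
    -- instantiate the consistency hypothesis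
    have hA : k α2 α1 = -a := hanti α1 α2
    have hB : k α3 α2 = -b := hanti α2 α3
    have hC : k α1 α3 = -c := hanti α3 α1
    obtain ⟨hy, -, -⟩ :=
      H α1 α2 α3 0 t 0 1 (a / t) (-b) (c / (1 - t))
        (t + b * t * (1 - t) / (a - (a + c) * t))
        (-c * t / (b * t + a))
        (1 - a * (1 - t) / (b * t - (c + b)))
        h12 h23 h31
        (by rw [← ha_def]; field_simp; ring)
        (by rw [← hb_def]; ring_nf)
        (by rw [← hc_def]; field_simp; ring)
        (by rw [← hb_def]; have : a - t * (a + c) ≠ 0 := (by contrapose! hT1; linear_combination hT1); field_simp; ring)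
        (by rw [← hc_def]; have : t * b + a ≠ 0 := (by contrapose! hT2; linear_combination hT2); field_simp; ring)
        (by rw [← ha_def]; have : t * b - (c + b) ≠ 0 := (by contrapose! hT3; linear_combination hT3); field_simp; ring)
        (by rw [hA, hB, hC]; intro h; apply hT2; linear_combination -h)
    rw [hA, hB, hC, ← ha_def, ← hb_def, ← hc_def] at hy
    have hD : -b * t + -c * 0 + -a * 1 ≠ 0 := by intro h; apply hT2; linear_combination -h
    rw [eq_div_iff hD] at hy
    rw [add_div' _ _ _ hT1, div_mul_eq_mul_div, div_eq_iff hT1] at hy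
    have key : (a + b + c) * (t * (b * t ^ 2 + (a + c - b) * t - a)) = 0 := by
      linear_combination hy
    rcases mul_eq_zero.mp key with h | h
    · exact h
    · exact absurd h (mul_ne_zero ht0 hQ)
  · intro hcoc α1 α2 α3 x x1 x2 x3 x12 x23 x31 y1 y2 y3 h12 h23 h31 hE1 hE2 hE3 hE4 hE5 hE6 hD
    have hc : k α1 α2 + k α2 α3 + k α3 α1 = 0 := hcoc α1 α2 α3
    set S := k α2 α3 * x1 + k α3 α1 * x2 + k α1 α2 * x3 with hS_def
    have h4' : (x1 - y1) * S + k α2 α3 * (x1 - x2) * (x3 - x1) = 0 := by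
      linear_combination (x1 - x2) * (x3 - x1) * hE4 - (x1 - y1) * (x1 - x2) * hE3 +
        (x1 - y1) * (x3 - x1) * hE1 + (x1 - y1) * x1 * hc
    have h5' : (x2 - y2) * S + k α3 α1 * (x2 - x3) * (x1 - x2) = 0 := by
      linear_combination (x2 - x3) * (x1 - x2) * hE5 - (x2 - y2) * (x2 - x3) * hE1 +
        (x2 - y2) * (x1 - x2) * hE2 + (x2 - y2) * x2 * hc
    have h6' : (x3 - y3) * S + k α1 α2 * (x3 - x1) * (x2 - x3) = 0 := by
      linear_combination (x3 - x1) * (x2 - x3) * hE6 - (x3 - y3) * (x3 - x1) * hE2 +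
        (x3 - y3) * (x2 - x3) * hE3 + (x3 - y3) * x3 * hc
    have hDS : k α3 α2 * x1 + k α1 α3 * x2 + k α2 α1 * x3 = -S := by
      rw [hS_def]
      linear_combination x1 * hanti α2 α3 + x2 * hanti α3 α1 + x3 * hanti α1 α2
    have hS0 : S ≠ 0 := fun h => hD (by rw [hDS, h, neg_zero])
    refine ⟨?_, ?_, ?_⟩
    · rw [eq_div_iff hD, hDS]
      linear_combination h4' - (x1 * x2 + x1 * x3) * hc
    · have h12' : (y1 - y2) * S = 0 := by
        linear_combination -h4' + h5' + (x1 - x2) * x3 * hc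
      have := mul_eq_zero.mp h12'
      rcases this with h | h
      · exact sub_eq_zero.mp h
      · exact absurd h hS0
    · have h23' : (y2 - y3) * S = 0 := by
        linear_combination -h5' + h6' + (x2 - x3) * x1 * hc
      rcases mul_eq_zero.mp h23' with h | h
      · exact sub_eq_zero.mp h
      · exact absurd h hS0
end

section
/- Equation (H2): (x−y)(u−v) + (β−α)(x+u+v+y) + β² − α² = 0 admits the multiplicative three-leg form centered at x: (x+u+α)/(x+v+β) = (x−y+α−β)/(x−y−α+β); i.e., for x,u,v,y satisfying (H2) with all relevant denominators nonzero, this identity of fractions holds, and conversely. -/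
theorem H2_cross_mul_sub_eq {R : Type*} [CommRing R] (x u v y α β : R) :
    (x + u + α) * (x - y - α + β) - (x - y + α - β) * (x + v + β) =
      (x - y) * (u - v) + (β - α) * (x + u + v + y) + β ^ 2 - α ^ 2 := by
  ring

/-- Equation (H2): `(x−y)(u−v) + (β−α)(x+u+v+y) + β² − α² = 0` admits the
multiplicative three-leg form `(x+u+α)/(x+v+β) = (x−y+α−β)/(x−y−α+β)` centered
at `x`, and conversely. -/
theorem H2_three_leg_form
    (x u v y α β : ℂ)
    (h1 : x + v + β ≠ 0) (h2 : x - y - α + β ≠ 0) :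
    (x - y) * (u - v) + (β - α) * (x + u + v + y) + β ^ 2 - α ^ 2 = 0 ↔
      (x + u + α) / (x + v + β) = (x - y + α - β) / (x - y - α + β) := by
  rw [div_eq_div_iff h1 h2, ← sub_eq_zero (a := _ * _), H2_cross_mul_sub_eq]
end

section
/- Equation (H3): α(xu+vy) − β(xv+uy) + δ(α²−β²) = 0 admits the multiplicative three-leg form (xu+δα)/(xv+δβ) = (βx−αy)/(αx−βy); i.e., for fields satisfying (H3) with nonzero denominators, this identity holds, and conversely it implies (H3). -/
theorem three_leg_cross_mul_sub {R : Type*} [CommRing R] (x u v y α β δ : R) :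
    (x * u + δ * α) * (α * x - β * y) - (β * x - α * y) * (x * v + δ * β) =
      x * (α * (x * u + v * y) - β * (x * v + u * y) + δ * (α ^ 2 - β ^ 2)) := by
  ring

/-- Equation (H3): `α(xu+vy) − β(xv+uy) + δ(α²−β²) = 0` admits the
multiplicative three-leg form `(xu+δα)/(xv+δβ) = (βx−αy)/(αx−βy)`, and
conversely (for `x ≠ 0`, so that the nondegenerate factor can be cancelled). -/
theorem H3_three_leg_form
    (x u v y α β δ : ℂ)
    (h1 : x * v + δ * β ≠ 0) (h2 : α * x - β * y ≠ 0) (hx : x ≠ 0) :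
    α * (x * u + v * y) - β * (x * v + u * y) + δ * (α ^ 2 - β ^ 2) = 0 ↔
      (x * u + δ * α) / (x * v + δ * β) = (β * x - α * y) / (α * x - β * y) := by
  rw [div_eq_div_iff h1 h2, ← sub_eq_zero (a := _ * _), three_leg_cross_mul_sub, mul_eq_zero,
    or_iff_right hx]
end

section
/- Equation (Q1) with δ=1: α(x−v)(u−y) − β(x−u)(v−y) + αβ(α−β) = 0 admits the multiplicative three-leg form ((x−u+α)/(x−u−α)) · ((x−v−β)/(x−v+β)) = (x−y+α−β)/(x−y−α+β), whenever the denominators are nonzero. -/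
theorem three_leg_cross_multiplied_sub {R : Type*} [CommRing R] (x u v y α β : R) :
    (x - u + α) * (x - v - β) * (x - y - α + β) - (x - y + α - β) * ((x - u - α) * (x - v + β)) =
      2 * (α * (x - v) * (u - y) - β * (x - u) * (v - y) + α * β * (α - β)) := by
  ring

theorem Q1_delta_one_three_leg_form_general
    (x u v y α β : ℂ)
    (hu1 : x - u - α ≠ 0)
    (hv1 : x - v + β ≠ 0)
    (hy1 : x - y - α + β ≠ 0) :
    α * (x - v) * (u - y) - β * (x - u) * (v - y) + α * β * (α - β) = 0 ↔
      ((x - u + α) / (x - u - α)) * ((x - v - β) / (x - v + β)) =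
        (x - y + α - β) / (x - y - α + β) := by
  rw [div_mul_div_comm, div_eq_div_iff (mul_ne_zero hu1 hv1) hy1, ← sub_eq_zero (a := _ * _ * _),
    three_leg_cross_multiplied_sub, mul_eq_zero_iff_left two_ne_zero]

/-- Equation (Q1) with `δ = 1`: `α(x−v)(u−y) − β(x−u)(v−y) + αβ(α−β) = 0`
admits the multiplicative three-leg form
`((x−u+α)/(x−u−α)) · ((x−v−β)/(x−v+β)) = (x−y+α−β)/(x−y−α+β)`. -/
theorem Q1_delta_one_three_leg_form
    (x u v y α β : ℂ)
    (hu1 : x - u - α ≠ 0) (hu2 : x - u + α ≠ 0)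
    (hv1 : x - v + β ≠ 0) (hv2 : x - v - β ≠ 0)
    (hy1 : x - y - α + β ≠ 0) (hy2 : x - y + α - β ≠ 0) :
    α * (x - v) * (u - y) - β * (x - u) * (v - y) + α * β * (α - β) = 0 ↔
      ((x - u + α) / (x - u - α)) * ((x - v - β) / (x - v + β)) =
        (x - y + α - β) / (x - y - α + β) :=
  Q1_delta_one_three_leg_form_general x u v y α β hu1 hv1 hy1
end

section
/- For the biquadratic polynomial h(x,u;α) = (α/(1−α²))(x²+u²) − ((1+α²)/(1−α²))·xu + δ²(1−α²)/(4α) (the case q3), the discriminant in u satisfies h_u² − 2h·h_uu = x² − δ², independent of the parameter α. -/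
/-- The discriminant of the biquadratic (q3): for
`h(x,u;α) = (α/(1−α²))(x²+u²) − ((1+α²)/(1−α²))xu + δ²(1−α²)/(4α)` one has
`h_u² − 2h·h_uu = x² − δ²`, independently of the parameter `α`. -/
theorem q3_discriminant (α δ : ℂ) (hα : α ≠ 0) (hα2 : α ^ 2 ≠ 1) (x u : ℂ) :
    (deriv (fun t => α / (1 - α ^ 2) * (x ^ 2 + t ^ 2) -
        (1 + α ^ 2) / (1 - α ^ 2) * (x * t) + δ ^ 2 * (1 - α ^ 2) / (4 * α)) u) ^ 2 -
      2 * (α / (1 - α ^ 2) * (x ^ 2 + u ^ 2) -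
        (1 + α ^ 2) / (1 - α ^ 2) * (x * u) + δ ^ 2 * (1 - α ^ 2) / (4 * α)) *
        deriv (deriv (fun t => α / (1 - α ^ 2) * (x ^ 2 + t ^ 2) -
          (1 + α ^ 2) / (1 - α ^ 2) * (x * t) + δ ^ 2 * (1 - α ^ 2) / (4 * α))) u
      = x ^ 2 - δ ^ 2 := by
  set a : ℂ := α / (1 - α ^ 2) with ha
  set b : ℂ := (1 + α ^ 2) / (1 - α ^ 2) with hb
  set c : ℂ := δ ^ 2 * (1 - α ^ 2) / (4 * α) with hc
  have hd : deriv (fun t => a * (x ^ 2 + t ^ 2) - b * (x * t) + c)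
      = fun t => a * (2 * t) - b * x := by
    funext t
    have h1 : HasDerivAt (fun t : ℂ => x ^ 2 + t ^ 2) (2 * t) t := by
      simpa using (hasDerivAt_pow 2 t).const_add (x ^ 2)
    have h2 : HasDerivAt (fun t : ℂ => x * t) x t := by
      simpa using (hasDerivAt_id t).const_mul x
    exact (((h1.const_mul a).sub (h2.const_mul b)).add_const c).deriv
  rw [hd]
  have hd2 : deriv (fun t : ℂ => a * (2 * t) - b * x) u = a * 2 := by
    have h4 : HasDerivAt (fun t : ℂ => a * (2 * t) - b * x) (a * 2) u := by
      simpa [mul_assoc] using ((hasDerivAt_id u).const_mul (a * 2)).sub_const (b * x)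
    exact h4.deriv
  rw [hd2]
  have h0 : (1 : ℂ) - α ^ 2 ≠ 0 := by
    intro h; apply hα2; linear_combination -h
  rw [ha, hb, hc]
  have hD : (α * 4 - α ^ 3 * 16 + (α ^ 5 * 24 - α ^ 7 * 16) + α ^ 9 * 4) ≠ 0 := by
    have : (α * 4 - α ^ 3 * 16 + (α ^ 5 * 24 - α ^ 7 * 16) + α ^ 9 * 4)
        = 4 * α * (1 - α ^ 2) ^ 4 := by ring
    rw [this]
    exact mul_ne_zero (mul_ne_zero (by norm_num) hα) (pow_ne_zero _ h0)
  field_simp [hα, h0]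
  linear_combination
end

section
/- The Weierstrass-type biquadratic h(x,u;α) = (1/ρ)·[(xu + α(x+u) + g2/4)² − (x+u+α)(4αxu − g3)], where ρ² = r(α) and r(t) = 4t³ − g2·t − g3, has discriminant in u equal to r(x): h_u² − 2h·h_uu = 4x³ − g2·x − g3, independent of α. -/
lemma deriv_quad (a b c : ℂ) :
    deriv (fun t : ℂ => a * t ^ 2 + b * t + c) = fun t => 2 * a * t + b := by
  funext t
  have h : HasDerivAt (fun t : ℂ => a * t ^ 2 + b * t + c) (2 * a * t + b) t := by
    have h1 : HasDerivAt (fun t : ℂ => a * t ^ 2) (a * (2 * t ^ 1)) t :=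
      (hasDerivAt_pow 2 t).const_mul a
    have h2 : HasDerivAt (fun t : ℂ => b * t) (b * 1) t := (hasDerivAt_id t).const_mul b
    have := (h1.add h2).add_const c
    refine this.congr_deriv ?_
    ring
  exact h.deriv

lemma deriv_lin (a b : ℂ) :
    deriv (fun t : ℂ => 2 * a * t + b) = fun _ => 2 * a := by
  funext t
  have h : HasDerivAt (fun t : ℂ => 2 * a * t + b) (2 * a) t := by
    have := ((hasDerivAt_id t).const_mul (2 * a)).add_const b
    simpa using this
  exact h.deriv

/-- The discriminant of the Weierstrass-type biquadratic (q4): for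
`h(x,u;α) = (1/ρ)[(xu + α(x+u) + g2/4)² − (x+u+α)(4αxu − g3)]` with
`ρ² = r(α)` and `r(t) = 4t³ − g2·t − g3`, one has
`h_u² − 2h·h_uu = r(x) = 4x³ − g2·x − g3`, independently of `α`. -/
theorem q4_discriminant (g2 g3 α ρ : ℂ)
    (hρ : ρ ^ 2 = 4 * α ^ 3 - g2 * α - g3) (hρ0 : ρ ≠ 0) (x u : ℂ) :
    (deriv (fun t => (1 / ρ) * ((x * t + α * (x + t) + g2 / 4) ^ 2 -
        (x + t + α) * (4 * α * x * t - g3))) u) ^ 2 -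
      2 * ((1 / ρ) * ((x * u + α * (x + u) + g2 / 4) ^ 2 -
        (x + u + α) * (4 * α * x * u - g3))) *
        deriv (deriv (fun t => (1 / ρ) * ((x * t + α * (x + t) + g2 / 4) ^ 2 -
          (x + t + α) * (4 * α * x * t - g3)))) u
      = 4 * x ^ 3 - g2 * x - g3 := by
  set A : ℂ := (1 / ρ) * ((x + α) ^ 2 - 4 * α * x) with hA
  set B : ℂ := (1 / ρ) * (2 * (x + α) * (α * x + g2 / 4) - (4 * α * x * (x + α) - g3)) with hB
  set C : ℂ := (1 / ρ) * ((α * x + g2 / 4) ^ 2 + g3 * (x + α)) with hC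
  have hf : (fun t => (1 / ρ) * ((x * t + α * (x + t) + g2 / 4) ^ 2 -
      (x + t + α) * (4 * α * x * t - g3))) = fun t : ℂ => A * t ^ 2 + B * t + C := by
    funext t
    rw [hA, hB, hC]
    ring
  rw [hf, deriv_quad, deriv_lin]
  have hval : (1 / ρ) * ((x * u + α * (x + u) + g2 / 4) ^ 2 -
      (x + u + α) * (4 * α * x * u - g3)) = A * u ^ 2 + B * u + C := by
    rw [hA, hB, hC]; ring
  rw [hval, hA, hB, hC]
  have hσ : (1 / ρ) * ρ = 1 := by field_simp
  linear_combination -(1 / ρ) ^ 2 * (4 * x ^ 3 - g2 * x - g3) * hρ +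
    ((1 / ρ) * ρ + 1) * (4 * x ^ 3 - g2 * x - g3) * hσ
end

section
/- If a function τ: ℤ⁴ → ℂ* satisfies the discrete BKP equation τ·τ_ijk − τ_i·τ_jk + τ_j·τ_ik − τ_k·τ_ij = 0 on every elementary 3-cube for all 1 ≤ i < j < k ≤ 4 (with subscripts denoting unit shifts in the corresponding lattice directions), then the four-dimensionally consistent value τ_1234 satisfies τ·τ_1234 − τ_12·τ_34 + τ_13·τ_24 − τ_14·τ_23 = 0; in particular τ_1234 = (τ_12·τ_34 − τ_13·τ_24 + τ_14·τ_23)/τ does not depend on the values τ_1, τ_2, τ_3, τ_4. Concretely: given sixteen nonzero complex numbers τ, τ_i (1≤i≤4), τ_ij (1≤i<j≤4), τ_1234-candidates determined by the BKP equation on the four 3-faces containing the vertex 1234, all four candidates coincide and equal (τ_12·τ_34 − τ_13·τ_24 + τ_14·τ_23)/τ. -/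
/-!
Multiply the BKP relation on the face shifted in direction `l` by `τ` and substitute
`τ·τ_ijk` from the relations on the three 3-cubes at the origin that contain direction `l`.
The terms carrying `τ_l` collect to `τ_l·(τ_12·τ_34 − τ_13·τ_24 + τ_14·τ_23)`, the Pfaffian of
the `τ_ij`, and all other terms cancel in pairs; it remains to divide by `τ·τ_l`.
-/

theorem bkp_shifted_faces_mul_eq_pfaffian {R : Type*} [CommRing R]
    (τ τ1 τ2 τ3 τ4 τ12 τ13 τ14 τ23 τ24 τ34 τ123 τ124 τ134 τ234 : R)
    (h123 : τ * τ123 - τ1 * τ23 + τ2 * τ13 - τ3 * τ12 = 0)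
    (h124 : τ * τ124 - τ1 * τ24 + τ2 * τ14 - τ4 * τ12 = 0)
    (h134 : τ * τ134 - τ1 * τ34 + τ3 * τ14 - τ4 * τ13 = 0)
    (h234 : τ * τ234 - τ2 * τ34 + τ3 * τ24 - τ4 * τ23 = 0) :
    τ * (τ12 * τ134 - τ13 * τ124 + τ14 * τ123) = τ1 * (τ12 * τ34 - τ13 * τ24 + τ14 * τ23) ∧
    τ * (τ12 * τ234 - τ23 * τ124 + τ24 * τ123) = τ2 * (τ12 * τ34 - τ13 * τ24 + τ14 * τ23) ∧
    τ * (τ13 * τ234 - τ23 * τ134 + τ34 * τ123) = τ3 * (τ12 * τ34 - τ13 * τ24 + τ14 * τ23) ∧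
    τ * (τ14 * τ234 - τ24 * τ134 + τ34 * τ124) = τ4 * (τ12 * τ34 - τ13 * τ24 + τ14 * τ23) :=
  ⟨by linear_combination τ12 * h134 - τ13 * h124 + τ14 * h123,
   by linear_combination τ12 * h234 - τ23 * h124 + τ24 * h123,
   by linear_combination τ13 * h234 - τ23 * h134 + τ34 * h123,
   by linear_combination τ14 * h234 - τ24 * h134 + τ34 * h124⟩

/-- Four-dimensional consistency of the discrete BKP equation: given nonzero
initial data `τ`, `τ_i`, `τ_ij` on a hypercube, with `τ_ijk` determined by the
discrete BKP equation `τ·τ_ijk − τ_i·τ_jk + τ_j·τ_ik − τ_k·τ_ij = 0` on the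
four 3-cubes adjacent to the initial vertex, the four candidate values for
`τ_1234` obtained from the BKP equation on the four 3-faces containing the
vertex `1234` all coincide and equal
`(τ_12·τ_34 − τ_13·τ_24 + τ_14·τ_23)/τ`; in particular `τ_1234` does not depend
on `τ_1, τ_2, τ_3, τ_4`. -/
theorem discrete_BKP_four_dimensional_consistency
    (τ τ1 τ2 τ3 τ4 τ12 τ13 τ14 τ23 τ24 τ34 τ123 τ124 τ134 τ234 : ℂ)
    (hτ : τ ≠ 0) (hτ1 : τ1 ≠ 0) (hτ2 : τ2 ≠ 0) (hτ3 : τ3 ≠ 0) (hτ4 : τ4 ≠ 0)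
    (h123 : τ * τ123 - τ1 * τ23 + τ2 * τ13 - τ3 * τ12 = 0)
    (h124 : τ * τ124 - τ1 * τ24 + τ2 * τ14 - τ4 * τ12 = 0)
    (h134 : τ * τ134 - τ1 * τ34 + τ3 * τ14 - τ4 * τ13 = 0)
    (h234 : τ * τ234 - τ2 * τ34 + τ3 * τ24 - τ4 * τ23 = 0) :
    (τ12 * τ134 - τ13 * τ124 + τ14 * τ123) / τ1 =
      (τ12 * τ34 - τ13 * τ24 + τ14 * τ23) / τ ∧
    (τ12 * τ234 - τ23 * τ124 + τ24 * τ123) / τ2 =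
      (τ12 * τ34 - τ13 * τ24 + τ14 * τ23) / τ ∧
    (τ13 * τ234 - τ23 * τ134 + τ34 * τ123) / τ3 =
      (τ12 * τ34 - τ13 * τ24 + τ14 * τ23) / τ ∧
    (τ14 * τ234 - τ24 * τ134 + τ34 * τ124) / τ4 =
      (τ12 * τ34 - τ13 * τ24 + τ14 * τ23) / τ := by
  obtain ⟨face1, face2, face3, face4⟩ :=
    bkp_shifted_faces_mul_eq_pfaffian τ τ1 τ2 τ3 τ4 τ12 τ13 τ14 τ23 τ24 τ34 τ123 τ124 τ134 τ234
      h123 h124 h134 h234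
  refine ⟨?_, ?_, ?_, ?_⟩
  · rw [div_eq_div_iff hτ1 hτ]; linear_combination face1
  · rw [div_eq_div_iff hτ2 hτ]; linear_combination face2
  · rw [div_eq_div_iff hτ3 hτ]; linear_combination face3
  · rw [div_eq_div_iff hτ4 hτ]; linear_combination face4
end
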